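/- Let H be a model graph with an isolated vertex P (a vertex of H incident to no full or dotted edge), and let G be a simple undirected graph. Then G admits an H-partition if and only if G contains four distinct vertices (x_A, x_B, x_C, x_D) that are H-isomorphic, i.e., such that for each full edge (p,q) of H, x_p is adjacent to x_q, and for each dotted edge (p,q) of H, x_p is nonadjacent to x_q. -/

import Mathlib

inductive Label : Type
  | A | B | C | D
deriving DecidableEq

instance instFintypeLabel : Fintype Label where
  elems := {Label.A, Label.B, Label.C, Label.D}
  complete := by intro x; cases x <;> simp

/-- A model graph: an undirected graph on the four labels A,B,C,D, each edge
marked full or dotted (never both), symmetric and irreflexive. -/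
structure ModelGraph : Type where
  full : Label → Label → Bool
  dotted : Label → Label → Bool
  full_symm : ∀ p q, full p q = full q p
  dotted_symm : ∀ p q, dotted p q = dotted q p
  full_irrefl : ∀ p, full p p = false
  dotted_irrefl : ∀ p, dotted p p = false
  not_both : ∀ p q, ¬ (full p q = true ∧ dotted p q = true)

/-- `ℓ` is an `H`-partition of `G`: all four classes nonempty, full edges of `H`
force complete adjacency, dotted edges force complete nonadjacency. -/
def IsHPartition {V : Type} (G : SimpleGraph V) (H : ModelGraph) (ℓ : V → Label) : Prop :=
  (∀ p : Label, ∃ v, ℓ v = p) ∧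
  (∀ u v, H.full (ℓ u) (ℓ v) = true → G.Adj u v) ∧
  (∀ u v, H.dotted (ℓ u) (ℓ v) = true → ¬ G.Adj u v)

/-- Label `p` is possible for vertex `v` relative to the partial labeling `pl`. -/
def Possible {V : Type} (G : SimpleGraph V) (H : ModelGraph)
    (pl : V → Option Label) (v : V) (p : Label) : Prop :=
  (∀ q y, H.full p q = true → pl y = some q → G.Adj v y) ∧
  (∀ q y, H.dotted p q = true → pl y = some q → ¬ G.Adj v y)

/-- Full-edge neighborhood of a set of labels. -/
def NFull (H : ModelGraph) (L : Finset Label) : Finset Label :=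
  Finset.univ.filter (fun q => ∃ p ∈ L, H.full p q = true)

/-- Dotted-edge neighborhood of a set of labels. -/
def NDotted (H : ModelGraph) (L : Finset Label) : Finset Label :=
  Finset.univ.filter (fun q => ∃ p ∈ L, H.dotted p q = true)

/-- Class sizes `a,b,c,d` as a function of the label. -/
def cnt (a b c d : ℕ) : Label → ℕ
  | .A => a | .B => b | .C => c | .D => d

/-!
Representatives of the four classes of an `H`-partition form an `H`-isomorphic quadruple, for any
`H`. Conversely, given an `H`-isomorphic quadruple `x`, put each `x q` with `q ≠ P` alone in class
`q` and every other vertex in class `P`: since `P` is isolated, no constraint of `H` ever involves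
class `P`, and all remaining constraints are between singletons `{x p}`, `{x q}`.
-/

def ModelGraph.IsIsolated (H : ModelGraph) (P : Label) : Prop :=
  ∀ q : Label, H.full P q = false ∧ H.dotted P q = false

namespace ModelGraph.IsIsolated

variable {H : ModelGraph} {P p q : Label}

theorem ne_of_full (hP : H.IsIsolated P) (h : H.full p q = true) : p ≠ P ∧ q ≠ P := by
  constructor <;> rintro rfl
  · rw [(hP q).1] at h
    exact Bool.false_ne_true h
  · rw [H.full_symm, (hP p).1] at h
    exact Bool.false_ne_true h

theorem ne_of_dotted (hP : H.IsIsolated P) (h : H.dotted p q = true) : p ≠ P ∧ q ≠ P := by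
  constructor <;> rintro rfl
  · rw [(hP q).2] at h
    exact Bool.false_ne_true h
  · rw [H.dotted_symm, (hP p).2] at h
    exact Bool.false_ne_true h

end ModelGraph.IsIsolated

section

variable {V : Type} {G : SimpleGraph V} {H : ModelGraph}

theorem IsHPartition.exists_injective_quadruple {ℓ : V → Label} (hℓ : IsHPartition G H ℓ) :
    ∃ x : Label → V, Function.Injective x ∧
      (∀ p q : Label, H.full p q = true → G.Adj (x p) (x q)) ∧
      (∀ p q : Label, H.dotted p q = true → ¬ G.Adj (x p) (x q)) := by
  obtain ⟨hsurj, hfull, hdot⟩ := hℓ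
  have hrep : ∀ p, ℓ (Function.surjInv hsurj p) = p := Function.surjInv_eq hsurj
  refine ⟨Function.surjInv hsurj, Function.injective_surjInv hsurj, fun p q h => ?_,
    fun p q h => ?_⟩
  · exact hfull _ _ (by rwa [hrep, hrep])
  · exact hdot _ _ (by rwa [hrep, hrep])

noncomputable def labelingOf (x : Label → V) (P : Label) (v : V) : Label :=
  (Function.partialInv x v).getD P

variable {x : Label → V} {P : Label}

theorem labelingOf_apply (hx : Function.Injective x) (q : Label) : labelingOf x P (x q) = q := by
  simp [labelingOf, Function.partialInv_left hx]

theorem apply_labelingOf (hx : Function.Injective x) {v : V} (hv : labelingOf x P v ≠ P) :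
    x (labelingOf x P v) = v := by
  unfold labelingOf at hv ⊢
  cases h : Function.partialInv x v with
  | none => simp [h] at hv
  | some q => exact (hx.isPartialInv q v).1 h

theorem isHPartition_labelingOf (hP : H.IsIsolated P) (hx : Function.Injective x)
    (hfull : ∀ p q : Label, H.full p q = true → G.Adj (x p) (x q))
    (hdot : ∀ p q : Label, H.dotted p q = true → ¬ G.Adj (x p) (x q)) :
    IsHPartition G H (labelingOf x P) := by
  refine ⟨fun p => ⟨x p, labelingOf_apply hx p⟩, fun u v h => ?_, fun u v h => ?_⟩
  · obtain ⟨hu, hv⟩ := hP.ne_of_full h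
    simpa only [apply_labelingOf hx hu, apply_labelingOf hx hv] using hfull _ _ h
  · obtain ⟨hu, hv⟩ := hP.ne_of_dotted h
    simpa only [apply_labelingOf hx hu, apply_labelingOf hx hv] using hdot _ _ h

end

/-- for a model graph with an isolated vertex P, G admits an
H-partition iff G contains an H-isomorphic quadruplet of distinct vertices. -/
theorem stmt_2 (H : ModelGraph) (P : Label)
    (hiso : ∀ q : Label, H.full P q = false ∧ H.dotted P q = false)
    {V : Type} (G : SimpleGraph V) :
    (∃ ℓ : V → Label, IsHPartition G H ℓ) ↔
      ∃ x : Label → V, Function.Injective x ∧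
        (∀ p q : Label, H.full p q = true → G.Adj (x p) (x q)) ∧
        (∀ p q : Label, H.dotted p q = true → ¬ G.Adj (x p) (x q)) :=
  ⟨fun ⟨_, hℓ⟩ => hℓ.exists_injective_quadruple,
    fun ⟨x, hx, hfull, hdot⟩ => ⟨labelingOf x P, isHPartition_labelingOf hiso hx hfull hdot⟩⟩
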